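/- Consider the Sturm–Liouville operator L_B u = −u'' + Qu on (0,1] with Q real-valued, regular at x=1 and limit-circle at x=0, domain determined by u(1)=0 and the boundary condition [u,s](0) + B[u,c](0) = 0 at the singular endpoint, where {c,s} is a real basis of solutions of ℓu = 0 with s(1)=0, s'(1)=1 and Wronskian sc' − s'c ≡ 1, and B ∈ ℂ \ {0}. Then L_B is dissipative if and only if Im B ≥ 0. -/

import Mathlib

open Complex MeasureTheory Filter

noncomputable section

/-- The Sturm–Liouville expression `ℓu = -u'' + Q u`. -/
def ell (Q : ℝ → ℝ) (u : ℝ → ℂ) (x : ℝ) : ℂ :=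
  -(deriv (deriv u) x) + (Q x : ℂ) * u x

/-- The Wronskian `[u,v](x) = u(x)v'(x) - u'(x)v(x)` of a complex function `u` with a
real function `v`. -/
def Wr (u : ℝ → ℂ) (v : ℝ → ℝ) (x : ℝ) : ℂ :=
  u x * Complex.ofReal (deriv v x) - deriv u x * Complex.ofReal (v x)

/-- Membership in the maximal domain: `u, ℓu ∈ L₂(0,1)`, `u` twice differentiable on
`(0,1]`, and `u(1) = 0`. -/
def InMaxDom (Q : ℝ → ℝ) (u : ℝ → ℂ) : Prop :=
  MemLp u 2 (volume.restrict (Set.Ioc (0:ℝ) 1)) ∧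
  MemLp (ell Q u) 2 (volume.restrict (Set.Ioc (0:ℝ) 1)) ∧
  (∀ x ∈ Set.Ioc (0:ℝ) 1, DifferentiableAt ℝ u x ∧ DifferentiableAt ℝ (deriv u) x) ∧
  u 1 = 0

/-- Membership in the domain of `L_B`: maximal domain together with existence of the
boundary Wronskians `[u,c](0)`, `[u,s](0)` and the boundary condition
`[u,s](0) + B [u,c](0) = 0`. -/
def InDomB (Q c s : ℝ → ℝ) (B : ℂ) (u : ℝ → ℂ) : Prop :=
  InMaxDom Q u ∧
  ∃ wc ws : ℂ,
    Tendsto (Wr u c) (nhdsWithin 0 (Set.Ioi 0)) (nhds wc) ∧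
    Tendsto (Wr u s) (nhdsWithin 0 (Set.Ioi 0)) (nhds ws) ∧
    ws + B * wc = 0

/-!
For `u` in the maximal domain, `F = Im (ū u')` has derivative `-Im (ū ℓu)` because `Q` is real,
vanishes at `1`, and equals `-Im ([u,s] · conj [u,c])` because `s c' - s' c = 1`. Integrating
gives Green's formula `Im ⟨ℓu, u⟩ = -Im ([u,s](0) · conj [u,c](0))`, which under the boundary
condition becomes `Im B · |[u,c](0)|²`. Conversely, `u = φ (s + B c)` with a smooth cutoff `φ`
equal to `1` near `0` and to `0` near `1` lies in the domain of `L_B` with `[u,c](0) = 1`,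
`[u,s](0) = -B`, so `Im ⟨L_B u, u⟩ = Im B`.
-/

open Set Topology ComplexConjugate

theorem hasDerivAt_im_conj_mul_deriv {Q : ℝ → ℝ} {u : ℝ → ℂ} {x : ℝ}
    (hu : DifferentiableAt ℝ u x) (hu' : DifferentiableAt ℝ (deriv u) x) :
    HasDerivAt (fun t => (conj (u t) * deriv u t).im) (-(conj (u x) * ell Q u x).im) x := by
  refine (imCLM.hasFDerivAt.comp_hasDerivAt x
    (hu.hasDerivAt.star.mul hu'.hasDerivAt)).congr_deriv ?_
  simp only [ell, imCLM_apply, mul_add, mul_neg, add_im, neg_im, mul_im, mul_re, conj_re, conj_im,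
    ofReal_re, ofReal_im, star_def]
  ring

theorem im_conj_mul_deriv_eq_neg_im_wr_mul_conj_wr {u : ℝ → ℂ} {c s : ℝ → ℝ} {x : ℝ}
    (hW : s x * deriv c x - deriv s x * c x = 1) :
    (conj (u x) * deriv u x).im = -(Wr u s x * conj (Wr u c x)).im := by
  simp only [Wr, map_sub, map_mul, conj_ofReal, sub_im, mul_im, mul_re, sub_re, conj_re, conj_im,
    ofReal_re, ofReal_im]
  linear_combination ((u x).im * (deriv u x).re - (u x).re * (deriv u x).im) * hW

theorem integrable_conj_mul_ell {Q : ℝ → ℝ} {u : ℝ → ℂ} (hu : InMaxDom Q u) :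
    Integrable (fun x => conj (u x) * ell Q u x) (volume.restrict (Ioc 0 1)) :=
  hu.1.star.integrable_mul hu.2.1

theorem im_integral_conj_mul_ell {Q c s : ℝ → ℝ} {u : ℝ → ℂ} {wc ws : ℂ}
    (hW : ∀ x ∈ Ioc (0:ℝ) 1, s x * deriv c x - deriv s x * c x = 1) (hu : InMaxDom Q u)
    (hwc : Tendsto (Wr u c) (𝓝[>] 0) (𝓝 wc)) (hws : Tendsto (Wr u s) (𝓝[>] 0) (𝓝 ws)) :
    (∫ x in Ioc (0:ℝ) 1, conj (u x) * ell Q u x).im = -(ws * conj wc).im := by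
  set F : ℝ → ℝ := fun t => (conj (u t) * deriv u t).im
  have hF : ∀ x ∈ Ioc (0:ℝ) 1, HasDerivAt F (-(conj (u x) * ell Q u x).im) x :=
    fun x hx => hasDerivAt_im_conj_mul_deriv (hu.2.2.1 x hx).1 (hu.2.2.1 x hx).2
  have hF0 : Tendsto F (𝓝[>] 0) (𝓝 (-(ws * conj wc).im)) := by
    refine (((continuous_im.tendsto _).comp
      (hws.mul ((continuous_conj.tendsto _).comp hwc))).neg).congr' ?_
    filter_upwards [Ioo_mem_nhdsGT (zero_lt_one' ℝ)] with x hx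
    exact (im_conj_mul_deriv_eq_neg_im_wr_mul_conj_wr (hW x (Ioo_subset_Ioc_self hx))).symm
  have hF1 : Tendsto F (𝓝[<] 1) (𝓝 0) := by
    have h1 := ((hF 1 (right_mem_Ioc.2 zero_lt_one)).continuousAt.continuousWithinAt
      (s := Iio 1)).tendsto
    simpa [F, hu.2.2.2] using h1
  have hint := integrable_conj_mul_ell hu
  have hFTC := intervalIntegral.integral_eq_sub_of_hasDerivAt_of_tendsto zero_lt_one
    (fun x hx => hF x (Ioo_subset_Ioc_self hx))
    ((intervalIntegrable_iff_integrableOn_Ioc_of_le zero_le_one).2 hint.im.neg) hF0 hF1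
  rw [intervalIntegral.integral_of_le zero_le_one, integral_neg] at hFTC
  have hIm := integral_im hint
  simp only [RCLike.im_to_complex] at hIm
  rw [← hIm]
  linarith

theorem ContinuousOn.memLp_restrict_of_isCompact {α E : Type*} [TopologicalSpace α]
    [T2Space α] [MeasurableSpace α] [OpensMeasurableSpace α] [NormedAddCommGroup E]
    {μ : Measure α} [IsFiniteMeasureOnCompacts μ] {K : Set α} {f : α → E}
    (hf : ContinuousOn f K) (hK : IsCompact K) (p : ENNReal) : MemLp f p (μ.restrict K) := by
  have : Fact (μ K < ⊤) := ⟨hK.measure_lt_top⟩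
  obtain ⟨C, hC⟩ := hK.exists_bound_of_continuousOn hf
  exact MemLp.of_bound (hf.aestronglyMeasurable_of_isCompact hK hK.measurableSet) C
    ((ae_restrict_iff' hK.measurableSet).2 (Eventually.of_forall hC))

def cutoff (x : ℝ) : ℝ := Real.smoothTransition (3 - 4 * x)

theorem contDiff_cutoff {n : ℕ∞} : ContDiff ℝ n cutoff :=
  Real.smoothTransition.contDiff.comp (contDiff_const.sub (contDiff_const.mul contDiff_id))

theorem cutoff_of_le {x : ℝ} (hx : x ≤ 1 / 2) : cutoff x = 1 :=
  Real.smoothTransition.one_of_one_le (by linarith)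

theorem cutoff_of_ge {x : ℝ} (hx : 3 / 4 ≤ x) : cutoff x = 0 :=
  Real.smoothTransition.zero_of_nonpos (by linarith)

theorem abs_cutoff_le_one (x : ℝ) : |cutoff x| ≤ 1 :=
  (abs_of_nonneg (Real.smoothTransition.nonneg _)).trans_le (Real.smoothTransition.le_one _)

theorem cutoff_eventuallyEq_of_notMem {x : ℝ} (hx : x ∉ Icc (1 / 2 : ℝ) (3 / 4)) :
    cutoff =ᶠ[𝓝 x] fun _ => cutoff x := by
  rcases not_and_or.1 hx with hx | hx <;> push Not at hx
  · filter_upwards [Iio_mem_nhds hx] with y hy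
    rw [cutoff_of_le hy.le, cutoff_of_le hx.le]
  · filter_upwards [Ioi_mem_nhds hx] with y hy
    rw [cutoff_of_ge hy.le, cutoff_of_ge hx.le]

theorem deriv_cutoff_of_notMem {x : ℝ} (hx : x ∉ Icc (1 / 2 : ℝ) (3 / 4)) :
    deriv cutoff x = 0 := by
  rw [(cutoff_eventuallyEq_of_notMem hx).deriv_eq, deriv_const]

theorem deriv_deriv_cutoff_of_notMem {x : ℝ} (hx : x ∉ Icc (1 / 2 : ℝ) (3 / 4)) :
    deriv (deriv cutoff) x = 0 := by
  have h : deriv cutoff =ᶠ[𝓝 x] fun _ => 0 :=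
    (cutoff_eventuallyEq_of_notMem hx).deriv.trans (Eventually.of_forall fun y => deriv_const y _)
  rw [h.deriv_eq, deriv_const]

section Truncation

variable {Q φ : ℝ → ℝ} {w w' : ℝ → ℂ} {U : Set ℝ} {x : ℝ}

theorem hasDerivAt_deriv_ofReal_mul (hU : IsOpen U) (hφ : ContDiff ℝ 2 φ)
    (hw : ∀ x ∈ U, HasDerivAt w (w' x) x) (hw' : ∀ x ∈ U, HasDerivAt w' (Q x * w x) x)
    (hx : x ∈ U) :
    HasDerivAt (deriv fun t => (φ t : ℂ) * w t)
      ((deriv (deriv φ) x : ℝ) * w x + 2 * (deriv φ x : ℝ) * w' x + φ x * (Q x * w x)) x := by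
  have hφ' : ∀ y, HasDerivAt (fun t => (φ t : ℂ)) (deriv φ y : ℝ) y := fun y =>
    ((hφ.differentiable two_ne_zero) y).hasDerivAt.ofReal_comp
  have hφ'' : ∀ y, HasDerivAt (fun t => ((deriv φ t : ℝ) : ℂ)) (deriv (deriv φ) y : ℝ) y :=
    fun y => (hφ.differentiable_deriv_two y).hasDerivAt.ofReal_comp
  have hderiv : deriv (fun t => (φ t : ℂ) * w t) =ᶠ[𝓝 x]
      fun t => (deriv φ t : ℝ) * w t + (φ t : ℂ) * w' t := by
    filter_upwards [hU.mem_nhds hx] with y hy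
    exact ((hφ' y).mul (hw y hy)).deriv
  refine (((hφ'' x).mul (hw x hx)).add ((hφ' x).mul (hw' x hx))).congr_of_eventuallyEq hderiv
    |>.congr_deriv ?_
  ring

theorem ell_ofReal_mul (hU : IsOpen U) (hφ : ContDiff ℝ 2 φ)
    (hw : ∀ x ∈ U, HasDerivAt w (w' x) x) (hw' : ∀ x ∈ U, HasDerivAt w' (Q x * w x) x)
    (hx : x ∈ U) :
    ell Q (fun t => (φ t : ℂ) * w t) x =
      -((deriv (deriv φ) x : ℝ) * w x + 2 * (deriv φ x : ℝ) * w' x) := by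
  rw [ell, (hasDerivAt_deriv_ofReal_mul hU hφ hw hw' hx).deriv]
  ring

theorem inMaxDom_cutoff_mul (hwL2 : MemLp w 2 (volume.restrict (Ioc 0 1)))
    (hw : ∀ x ∈ Ioo (0:ℝ) 1, HasDerivAt w (w' x) x)
    (hw' : ∀ x ∈ Ioo (0:ℝ) 1, HasDerivAt w' (Q x * w x) x) :
    InMaxDom Q (fun x => (cutoff x : ℂ) * w x) := by
  set u : ℝ → ℂ := fun x => (cutoff x : ℂ) * w x
  set K := Icc (1 / 2 : ℝ) (3 / 4)
  have hφ : ContDiff ℝ 2 cutoff := contDiff_cutoff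
  have hu1 : u =ᶠ[𝓝 1] 0 := by
    filter_upwards [cutoff_eventuallyEq_of_notMem (x := 1) (by norm_num [K])] with y hy
    simp [u, hy, cutoff_of_ge (x := 1) (by norm_num)]
  have hell : ∀ x ∈ Ioo (0:ℝ) 1, ell Q u x =
      -((deriv (deriv cutoff) x : ℝ) * w x + 2 * (deriv cutoff x : ℝ) * w' x) :=
    fun x hx => ell_ofReal_mul isOpen_Ioo hφ hw hw' hx
  have hellK : ContinuousOn (ell Q u) K := by
    have hcont : ContinuousOn
        (fun x => -((deriv (deriv cutoff) x : ℝ) * w x + 2 * (deriv cutoff x : ℝ) * w' x))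
        (Ioo (0:ℝ) 1) := by
      have hwc : ContinuousOn w (Ioo (0:ℝ) 1) :=
        fun x hx => (hw x hx).continuousAt.continuousWithinAt
      have hw'c : ContinuousOn w' (Ioo (0:ℝ) 1) :=
        fun x hx => (hw' x hx).continuousAt.continuousWithinAt
      have hφ' := (contDiff_cutoff (n := 2)).continuous_deriv one_le_two
      have hφ'' := ((contDiff_cutoff (n := 2 + 1)).deriv').continuous_deriv one_le_two
      fun_prop
    exact (hcont.congr hell).mono fun x hx => ⟨by linarith [hx.1], by linarith [hx.2]⟩
  refine ⟨?_, ?_, fun x hx => ?_, by simp [u, cutoff_of_ge (x := 1) (by norm_num)]⟩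
  · refine hwL2.of_le ((continuous_ofReal.comp hφ.continuous).aestronglyMeasurable.mul
      hwL2.1) (Eventually.of_forall fun x => ?_)
    simpa [u, norm_mul] using mul_le_of_le_one_left (norm_nonneg (w x)) (abs_cutoff_le_one x)
  · rw [← Measure.restrict_congr_set Ioo_ae_eq_Ioc]
    have hKL2 : MemLp (K.indicator (ell Q u)) 2 volume :=
      (memLp_indicator_iff_restrict measurableSet_Icc).2
        (hellK.memLp_restrict_of_isCompact isCompact_Icc 2)
    refine (hKL2.restrict _).ae_eq ?_
    filter_upwards [ae_restrict_mem measurableSet_Ioo] with x hx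
    by_cases hxK : x ∈ K
    · exact indicator_of_mem hxK _
    · simp [indicator_of_notMem hxK, hell x hx, deriv_cutoff_of_notMem hxK,
        deriv_deriv_cutoff_of_notMem hxK]
  · rcases hx.2.lt_or_eq with hx1 | rfl
    · have hx' : x ∈ Ioo (0:ℝ) 1 := ⟨hx.1, hx1⟩
      exact ⟨((hφ.differentiable two_ne_zero x).hasDerivAt.ofReal_comp.mul
        (hw x hx')).differentiableAt,
        (hasDerivAt_deriv_ofReal_mul isOpen_Ioo hφ hw hw' hx').differentiableAt⟩
    · exact ⟨hu1.differentiableAt_iff.2 (differentiableAt_const 0),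
        hu1.deriv.differentiableAt_iff.2 (by simp)⟩

theorem wr_cutoff_mul_of_mem_Ioo (hw : ∀ x ∈ Ioo (0:ℝ) 1, HasDerivAt w (w' x) x) (v : ℝ → ℝ)
    (hx : x ∈ Ioo (0:ℝ) (1 / 2)) :
    Wr (fun t => (cutoff t : ℂ) * w t) v x = w x * deriv v x - w' x * v x := by
  have h : (fun t => (cutoff t : ℂ) * w t) =ᶠ[𝓝 x] w := by
    filter_upwards [cutoff_eventuallyEq_of_notMem (x := x) fun h => by linarith [h.1, hx.2]]
      with y hy
    simp [hy, cutoff_of_le hx.2.le]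
  rw [Wr, h.eq_of_nhds, h.deriv_eq, (hw x ⟨hx.1, by linarith [hx.2]⟩).deriv]

end Truncation

theorem exists_inMaxDom_tendsto_wr {Q c s : ℝ → ℝ} (B : ℂ)
    (hceq : ∀ x ∈ Ioc (0:ℝ) 1, deriv (deriv c) x = Q x * c x)
    (hseq : ∀ x ∈ Ioc (0:ℝ) 1, deriv (deriv s) x = Q x * s x)
    (hsm : ∀ x ∈ Ioc (0:ℝ) 1, DifferentiableAt ℝ c x ∧ DifferentiableAt ℝ (deriv c) x ∧
      DifferentiableAt ℝ s x ∧ DifferentiableAt ℝ (deriv s) x)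
    (hW : ∀ x ∈ Ioc (0:ℝ) 1, s x * deriv c x - deriv s x * c x = 1)
    (hcL2 : MemLp (fun x => (c x : ℂ)) 2 (volume.restrict (Ioc 0 1)))
    (hsL2 : MemLp (fun x => (s x : ℂ)) 2 (volume.restrict (Ioc 0 1))) :
    ∃ u, InMaxDom Q u ∧ Tendsto (Wr u c) (𝓝[>] 0) (𝓝 1) ∧
      Tendsto (Wr u s) (𝓝[>] 0) (𝓝 (-B)) := by
  set w : ℝ → ℂ := fun x => s x + B * c x
  set w' : ℝ → ℂ := fun x => (deriv s x : ℝ) + B * (deriv c x : ℝ)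
  have hw : ∀ x ∈ Ioo (0:ℝ) 1, HasDerivAt w (w' x) x ∧ HasDerivAt w' (Q x * w x) x := by
    intro x hx
    have hx' := Ioo_subset_Ioc_self hx
    obtain ⟨hc, hc', hs, hs'⟩ := hsm x hx'
    refine ⟨hs.hasDerivAt.ofReal_comp.add (hc.hasDerivAt.ofReal_comp.const_mul B),
      (hs'.hasDerivAt.ofReal_comp.add (hc'.hasDerivAt.ofReal_comp.const_mul B)).congr_deriv ?_⟩
    rw [hseq x hx', hceq x hx']
    push_cast
    ring
  have hwL2 : MemLp w 2 (volume.restrict (Ioc 0 1)) := hsL2.add (hcL2.const_mul B)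
  have hwr : ∀ v : ℝ → ℝ, ∀ᶠ x in 𝓝[>] 0,
      Wr (fun t => (cutoff t : ℂ) * w t) v x = w x * deriv v x - w' x * v x := fun v => by
    filter_upwards [Ioo_mem_nhdsGT (by norm_num : (0:ℝ) < 1 / 2)] with x hx
    exact wr_cutoff_mul_of_mem_Ioo (fun x hx => (hw x hx).1) v hx
  have hWx : ∀ᶠ x in 𝓝[>] (0:ℝ),
      (s x : ℂ) * (deriv c x : ℝ) - (deriv s x : ℝ) * (c x : ℝ) = 1 := by
    filter_upwards [Ioo_mem_nhdsGT (zero_lt_one' ℝ)] with x hx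
    exact_mod_cast hW x (Ioo_subset_Ioc_self hx)
  refine ⟨fun x => (cutoff x : ℂ) * w x, inMaxDom_cutoff_mul hwL2 (fun x hx => (hw x hx).1)
    (fun x hx => (hw x hx).2), tendsto_const_nhds.congr' ?_, tendsto_const_nhds.congr' ?_⟩
  · filter_upwards [hwr c, hWx] with x hwrx hWx
    rw [hwrx]
    linear_combination -hWx
  · filter_upwards [hwr s, hWx] with x hwrx hWx
    rw [hwrx]
    linear_combination B * hWx

theorem im_integral_conj_mul_ell_of_boundary_condition {Q c s : ℝ → ℝ} {B : ℂ} {u : ℝ → ℂ}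
    {wc ws : ℂ} (hW : ∀ x ∈ Ioc (0:ℝ) 1, s x * deriv c x - deriv s x * c x = 1)
    (hu : InMaxDom Q u) (hwc : Tendsto (Wr u c) (𝓝[>] 0) (𝓝 wc))
    (hws : Tendsto (Wr u s) (𝓝[>] 0) (𝓝 ws)) (hbc : ws + B * wc = 0) :
    (∫ x in Ioc (0:ℝ) 1, conj (u x) * ell Q u x).im = B.im * normSq wc := by
  rw [im_integral_conj_mul_ell hW hu hwc hws, eq_neg_of_add_eq_zero_left hbc, neg_mul, neg_im,
    neg_neg, mul_assoc, mul_conj, im_mul_ofReal]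

theorem limit_circle_dissipative_iff_general
    (Q c s : ℝ → ℝ) (B : ℂ)
    -- `c, s` real solutions of `ℓu = 0` on `(0,1]` with `s(1)=0`, `s'(1)=1`, `sc'-s'c ≡ 1`
    (hceq : ∀ x ∈ Set.Ioc (0:ℝ) 1, deriv (deriv c) x = Q x * c x)
    (hseq : ∀ x ∈ Set.Ioc (0:ℝ) 1, deriv (deriv s) x = Q x * s x)
    (hsm : ∀ x ∈ Set.Ioc (0:ℝ) 1, DifferentiableAt ℝ c x ∧ DifferentiableAt ℝ (deriv c) x ∧
      DifferentiableAt ℝ s x ∧ DifferentiableAt ℝ (deriv s) x)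
    (hW : ∀ x ∈ Set.Ioc (0:ℝ) 1, s x * deriv c x - deriv s x * c x = 1)
    -- limit-circle at `0`: all solutions square integrable
    (hcL2 : MemLp (fun x => (c x : ℂ)) 2 (volume.restrict (Set.Ioc (0:ℝ) 1)))
    (hsL2 : MemLp (fun x => (s x : ℂ)) 2 (volume.restrict (Set.Ioc (0:ℝ) 1))) :
    (∀ u : ℝ → ℂ, InDomB Q c s B u →
        0 ≤ (∫ x in Set.Ioc (0:ℝ) 1, (starRingEnd ℂ) (u x) * ell Q u x).im)
      ↔ 0 ≤ B.im := by
  constructor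
  · intro hdiss
    obtain ⟨u, hu, hwc, hws⟩ := exists_inMaxDom_tendsto_wr B hceq hseq hsm hW hcL2 hsL2
    have h := hdiss u ⟨hu, 1, -B, hwc, hws, by ring⟩
    rwa [im_integral_conj_mul_ell_of_boundary_condition hW hu hwc hws (by ring), map_one,
      mul_one] at h
  · rintro hImB u ⟨hu, wc, ws, hwc, hws, hbc⟩
    rw [im_integral_conj_mul_ell_of_boundary_condition hW hu hwc hws hbc]
    exact mul_nonneg hImB (normSq_nonneg wc)

/-- The limit-circle Sturm–Liouville operator `L_B` is dissipative iff `Im B ≥ 0`. -/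
theorem limit_circle_dissipative_iff
    (Q c s : ℝ → ℝ) (B : ℂ) (hB : B ≠ 0)
    -- `c, s` real solutions of `ℓu = 0` on `(0,1]` with `s(1)=0`, `s'(1)=1`, `sc'-s'c ≡ 1`
    (hs1 : s 1 = 0) (hs'1 : deriv s 1 = 1)
    (hceq : ∀ x ∈ Set.Ioc (0:ℝ) 1, deriv (deriv c) x = Q x * c x)
    (hseq : ∀ x ∈ Set.Ioc (0:ℝ) 1, deriv (deriv s) x = Q x * s x)
    (hsm : ∀ x ∈ Set.Ioc (0:ℝ) 1, DifferentiableAt ℝ c x ∧ DifferentiableAt ℝ (deriv c) x ∧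
      DifferentiableAt ℝ s x ∧ DifferentiableAt ℝ (deriv s) x)
    (hW : ∀ x ∈ Set.Ioc (0:ℝ) 1, s x * deriv c x - deriv s x * c x = 1)
    -- limit-circle at `0`: all solutions square integrable
    (hcL2 : MemLp (fun x => (c x : ℂ)) 2 (volume.restrict (Set.Ioc (0:ℝ) 1)))
    (hsL2 : MemLp (fun x => (s x : ℂ)) 2 (volume.restrict (Set.Ioc (0:ℝ) 1)))
    -- `Q` is regular at `x = 1`
    (hQ : IntegrableOn Q (Set.Ioc (1/2 : ℝ) 1))
    -- `0` is not an eigenvalue of `L_B`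
    (h0 : ∀ u : ℝ → ℂ, InDomB Q c s B u →
      (∀ x ∈ Set.Ioc (0:ℝ) 1, ell Q u x = 0) → ∀ x ∈ Set.Ioc (0:ℝ) 1, u x = 0) :
    (∀ u : ℝ → ℂ, InDomB Q c s B u →
        0 ≤ (∫ x in Set.Ioc (0:ℝ) 1, (starRingEnd ℂ) (u x) * ell Q u x).im)
      ↔ 0 ≤ B.im :=
  limit_circle_dissipative_iff_general Q c s B hceq hseq hsm hW hcL2 hsL2
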